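/- arXiv:1505.01695 — 3 statements merged into one kernel-verified Lean document; each statement's English description precedes it below -/
import Mathlib

section
/- Let R be a binary relation on a type α, partitioned into R = R₁ ∪ R₂. Suppose there is a function w : α → S into a set S with a well-founded order such that for every (a,b) with R₁ a b we have w a > w b, and for every (a,b) with R₂ a b we have w a ≥ w b. Then R is terminating (well-founded as a reduction relation, i.e., admits no infinite R-chains) if and only if R₂ is terminating. -/
/-!
Along an infinite `R₁ ∪ R₂`-chain the weights form a non-increasing sequence in a well-founded
order, so they are eventually constant. From that point on no step can strictly decrease the
weight, hence every step is an `R₂`-step and the tail of the chain is an infinite `R₂`-chain.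
-/

theorem exists_tail_chain_of_weight {α S : Type*} [PartialOrder S] [WellFoundedLT S]
    {R₁ R₂ : α → α → Prop} (w : α → S)
    (h1 : ∀ a b, R₁ a b → w b < w a) (h2 : ∀ a b, R₂ a b → w b ≤ w a)
    {f : ℕ → α} (hf : ∀ n, R₁ (f n) (f (n + 1)) ∨ R₂ (f n) (f (n + 1))) :
    ∃ k, ∀ n, R₂ (f (k + n)) (f (k + n + 1)) := by
  have hanti : Antitone (w ∘ f) :=
    antitone_nat_of_succ_le fun n => (hf n).elim (fun h => (h1 _ _ h).le) (h2 _ _)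
  obtain ⟨k, hk⟩ := WellFoundedLT.antitone_chain_condition hanti
  refine ⟨k, fun n => (hf (k + n)).resolve_left fun h => ?_⟩
  exact (h1 _ _ h).ne ((hk _ (by omega)).symm.trans (hk _ (by omega)))

theorem stmt_9 {α : Type*} {S : Type*} [PartialOrder S]
    (hwf : WellFounded ((· < ·) : S → S → Prop))
    (R R₁ R₂ : α → α → Prop)
    (hR : ∀ a b, R a b ↔ R₁ a b ∨ R₂ a b)
    (w : α → S)
    (h1 : ∀ a b, R₁ a b → w b < w a)
    (h2 : ∀ a b, R₂ a b → w b ≤ w a) :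
    (¬ ∃ f : ℕ → α, ∀ n, R (f n) (f (n + 1))) ↔
      (¬ ∃ f : ℕ → α, ∀ n, R₂ (f n) (f (n + 1))) := by
  have : WellFoundedLT S := ⟨hwf⟩
  constructor
  · rintro hR_term ⟨f, hf⟩
    exact hR_term ⟨f, fun n => (hR _ _).2 (Or.inr (hf n))⟩
  · rintro hR₂_term ⟨f, hf⟩
    obtain ⟨k, hk⟩ := exists_tail_chain_of_weight w h1 h2 fun n => (hR _ _).1 (hf n)
    exact hR₂_term ⟨fun n => f (k + n), hk⟩
end

section
/- Let T be a weighted type graph over a commutative semiring S, and let a pushout square G₁ ←ψ₁− G₀ −ψ₂→ G₂, with pushout object G and injections φ₁, φ₂, have discrete G₀ (G₀ has no edges). Then for every typing morphism t : G → T, w_T(t) = w_T(t ∘ φ₁) ⊗ w_T(t ∘ φ₂), where w_T(t) = ∏_{e ∈ E_D} w_T(t(e)) for t with domain D. -/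
structure LabGraph (Λ : Type) where
  V : Type
  E : Type
  src : E → V
  tgt : E → V
  lab : E → Λ

@[ext]
structure GraphHom {Λ : Type} (G H : LabGraph Λ) where
  fV : G.V → H.V
  fE : G.E → H.E
  src_eq : ∀ e, H.src (fE e) = fV (G.src e)
  tgt_eq : ∀ e, H.tgt (fE e) = fV (G.tgt e)
  lab_eq : ∀ e, H.lab (fE e) = G.lab e

def GraphHom.comp {Λ : Type} {G H K : LabGraph Λ} (g : GraphHom H K) (f : GraphHom G H) :
    GraphHom G K where
  fV := g.fV ∘ f.fV
  fE := g.fE ∘ f.fE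
  src_eq e := by simp [g.src_eq, f.src_eq]
  tgt_eq e := by simp [g.tgt_eq, f.tgt_eq]
  lab_eq e := by simp [g.lab_eq, f.lab_eq]

/-- The pushout property via the universal property in the category of graphs. -/
def IsGraphPushout {Λ : Type} {G₀ G₁ G₂ G : LabGraph Λ}
    (ψ₁ : GraphHom G₀ G₁) (ψ₂ : GraphHom G₀ G₂)
    (φ₁ : GraphHom G₁ G) (φ₂ : GraphHom G₂ G) : Prop :=
  φ₁.comp ψ₁ = φ₂.comp ψ₂ ∧
    ∀ (T : LabGraph Λ) (t₁ : GraphHom G₁ T) (t₂ : GraphHom G₂ T),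
      t₁.comp ψ₁ = t₂.comp ψ₂ →
        ∃! t : GraphHom G T, t.comp φ₁ = t₁ ∧ t.comp φ₂ = t₂


/-- The weight of a typing morphism: product of the weights of the images of all edges. -/
def weight {Λ : Type} {S : Type*} [CommSemiring S] {D T : LabGraph Λ} [Fintype D.E]
    (w : T.E → S) (t : GraphHom D T) : S :=
  ∏ e : D.E, w (t.fE e)

/-
A pushout of graphs is computed separately on vertices and on edges, so when the interface G₀ has
no edges, the edges of G are the disjoint union of those of G₁ and G₂, injected by φ₁ and φ₂. The
weight of t is a product over the edges of G, which therefore splits into the products over the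
edges of G₁ and of G₂.

To obtain the edge bijection from the universal property alone, map G₁ and G₂ into the graph with
the vertices of G and edge set G₁.E ⊕ G₂.E; the induced map out of G inverts Sum.elim φ₁.fE φ₂.fE.
-/

namespace GraphHom

variable {Λ : Type}

protected def id (G : LabGraph Λ) : GraphHom G G :=
  ⟨fun v => v, fun e => e, fun _ => rfl, fun _ => rfl, fun _ => rfl⟩

theorem comp_assoc {G H K L : LabGraph Λ} (h : GraphHom K L) (g : GraphHom H K)
    (f : GraphHom G H) : (h.comp g).comp f = h.comp (g.comp f) := rfl

end GraphHom

namespace LabGraph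

variable {Λ : Type} {G₁ G₂ G : LabGraph Λ}

def edgeSum (φ₁ : GraphHom G₁ G) (φ₂ : GraphHom G₂ G) : LabGraph Λ where
  V := G.V
  E := G₁.E ⊕ G₂.E
  src := Sum.elim (fun e => φ₁.fV (G₁.src e)) (fun e => φ₂.fV (G₂.src e))
  tgt := Sum.elim (fun e => φ₁.fV (G₁.tgt e)) (fun e => φ₂.fV (G₂.tgt e))
  lab := Sum.elim G₁.lab G₂.lab

namespace edgeSum

variable (φ₁ : GraphHom G₁ G) (φ₂ : GraphHom G₂ G)

def inl : GraphHom G₁ (edgeSum φ₁ φ₂) :=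
  ⟨φ₁.fV, Sum.inl, fun _ => rfl, fun _ => rfl, fun _ => rfl⟩

def inr : GraphHom G₂ (edgeSum φ₁ φ₂) :=
  ⟨φ₂.fV, Sum.inr, fun _ => rfl, fun _ => rfl, fun _ => rfl⟩

def desc : GraphHom (edgeSum φ₁ φ₂) G where
  fV v := v
  fE := Sum.elim φ₁.fE φ₂.fE
  src_eq e := by cases e <;> simp [edgeSum, φ₁.src_eq, φ₂.src_eq]
  tgt_eq e := by cases e <;> simp [edgeSum, φ₁.tgt_eq, φ₂.tgt_eq]
  lab_eq e := by cases e <;> simp [edgeSum, φ₁.lab_eq, φ₂.lab_eq]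

end edgeSum

end LabGraph

namespace IsGraphPushout

open LabGraph

variable {Λ : Type} {G₀ G₁ G₂ G : LabGraph Λ}
  {ψ₁ : GraphHom G₀ G₁} {ψ₂ : GraphHom G₀ G₂} {φ₁ : GraphHom G₁ G} {φ₂ : GraphHom G₂ G}

theorem hom_ext (hpo : IsGraphPushout ψ₁ ψ₂ φ₁ φ₂) {T : LabGraph Λ} {h h' : GraphHom G T}
    (h₁ : h.comp φ₁ = h'.comp φ₁) (h₂ : h.comp φ₂ = h'.comp φ₂) : h = h' := by
  have hcomm : (h.comp φ₁).comp ψ₁ = (h.comp φ₂).comp ψ₂ := by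
    rw [GraphHom.comp_assoc, hpo.1, GraphHom.comp_assoc]
  exact (hpo.2 T _ _ hcomm).unique ⟨rfl, rfl⟩ ⟨h₁.symm, h₂.symm⟩

theorem bijective_sumElim_fE [IsEmpty G₀.E] (hpo : IsGraphPushout ψ₁ ψ₂ φ₁ φ₂) :
    Function.Bijective (Sum.elim φ₁.fE φ₂.fE) := by
  have hcomm : (edgeSum.inl φ₁ φ₂).comp ψ₁ = (edgeSum.inr φ₁ φ₂).comp ψ₂ := by
    ext x
    · exact congrFun (congrArg GraphHom.fV hpo.1) x
    · exact isEmptyElim x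
  obtain ⟨u, ⟨hu₁, hu₂⟩, -⟩ := hpo.2 _ _ _ hcomm
  have hdesc_u : (edgeSum.desc φ₁ φ₂).comp u = GraphHom.id G :=
    hpo.hom_ext (by rw [GraphHom.comp_assoc, hu₁]; rfl) (by rw [GraphHom.comp_assoc, hu₂]; rfl)
  refine Function.bijective_iff_has_inverse.2 ⟨u.fE, ?_, ?_⟩
  · rintro (e | e)
    · exact congrFun (congrArg GraphHom.fE hu₁) e
    · exact congrFun (congrArg GraphHom.fE hu₂) e
  · exact congrFun (congrArg GraphHom.fE hdesc_u)

end IsGraphPushout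

theorem weight_eq_mul_of_bijective {Λ : Type} {S : Type*} [CommSemiring S]
    {G₁ G₂ G T : LabGraph Λ} [Fintype G.E] [Fintype G₁.E] [Fintype G₂.E]
    {φ₁ : GraphHom G₁ G} {φ₂ : GraphHom G₂ G} (hbij : Function.Bijective (Sum.elim φ₁.fE φ₂.fE))
    (w : T.E → S) (t : GraphHom G T) :
    weight w t = weight w (t.comp φ₁) * weight w (t.comp φ₂) :=
  calc weight w t = ∏ e, w (t.fE (Sum.elim φ₁.fE φ₂.fE e)) := (hbij.prod_comp _).symm
    _ = _ := Fintype.prod_sum_type _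

theorem stmt_13 {Λ : Type} {S : Type*} [CommSemiring S]
    {G₀ G₁ G₂ G T : LabGraph Λ}
    [Fintype G.E] [Fintype G₁.E] [Fintype G₂.E]
    (hdiscrete : IsEmpty G₀.E)
    (ψ₁ : GraphHom G₀ G₁) (ψ₂ : GraphHom G₀ G₂)
    (φ₁ : GraphHom G₁ G) (φ₂ : GraphHom G₂ G)
    (hpo : IsGraphPushout ψ₁ ψ₂ φ₁ φ₂)
    (w : T.E → S) (t : GraphHom G T) :
    weight w t = weight w (t.comp φ₁) * weight w (t.comp φ₂) :=
  weight_eq_mul_of_bijective hpo.bijective_sumElim_fE w t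
end

section
/- The string rewriting system with the single rule aa → aba over the alphabet {a,b} is terminating: there is no infinite sequence of strings w₀ → w₁ → ⋯ where each step replaces an occurrence of the factor 'aa' by 'aba'. -/
/-! Rewriting `aa` to `aba` destroys that occurrence of `aa` and creates none, since the new
letter is `b`; the neighbouring occurrences, which share an outer `a`, survive. So the number
of occurrences of `aa` is a measure into `ℕ` that drops by one at every step. -/

inductive AB : Type
  | a : AB
  | b : AB

/-- One rewrite step of the string rewriting rule `aa → aba`. -/
def Step (w₁ w₂ : List AB) : Prop :=
  ∃ u v : List AB, w₁ = u ++ [AB.a, AB.a] ++ v ∧ w₂ = u ++ [AB.a, AB.b, AB.a] ++ v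

def countAA : List AB → ℕ
  | AB.a :: AB.a :: t => countAA (AB.a :: t) + 1
  | _ :: t => countAA t
  | [] => 0

theorem countAA_append_a_cons (u w : List AB) :
    countAA (u ++ AB.a :: w) = countAA (u ++ [AB.a]) + countAA (AB.a :: w) := by
  induction u with
  | nil => simp [countAA]
  | cons x u ih =>
    match x, u with
    | AB.a, [] => cases w with
      | nil => simp [countAA]
      | cons y w => cases y <;> simp [countAA] <;> omega
    | AB.a, AB.a :: u => simp only [List.cons_append, countAA] at ih ⊢; omega
    | AB.a, AB.b :: u => simpa [countAA] using ih
    | AB.b, u => simpa [countAA] using ih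

theorem Step.countAA_lt {w₁ w₂ : List AB} (h : Step w₁ w₂) : countAA w₂ < countAA w₁ := by
  obtain ⟨u, v, rfl, rfl⟩ := h
  have h₁ : countAA (u ++ [AB.a, AB.a] ++ v) =
      countAA (u ++ [AB.a]) + countAA (AB.a :: v) + 1 := by
    rw [List.append_assoc, List.cons_append, countAA_append_a_cons]
    simp only [List.singleton_append, countAA, Nat.add_assoc]
  have h₂ : countAA (u ++ [AB.a, AB.b, AB.a] ++ v) =
      countAA (u ++ [AB.a]) + countAA (AB.a :: v) := by
    rw [List.append_assoc, List.cons_append, List.cons_append, countAA_append_a_cons]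
    simp only [List.cons_append, List.nil_append, countAA]
  omega

theorem stmt_16 : ¬ ∃ f : ℕ → List AB, ∀ n, Step (f n) (f (n + 1)) := by
  rintro ⟨f, hf⟩
  exact not_strictAnti_of_wellFoundedLT (countAA ∘ f)
    (strictAnti_nat_of_succ_lt fun n ↦ (hf n).countAA_lt)
end
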